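/- Let Q be a lower triangular matrix with diagonal entries ρ₁,…,ρ_k ∈ (0,1). For indices i > j such that there is an admissible path from i to j (a strictly decreasing sequence i = θ₁ > θ₂ > ⋯ > θ_κ = j with Q_{θ_u θ_{u+1}} ≠ 0 for all u), the entry (Qⁿ)_{ij} is the sum over all such admissible paths θ of Q_{θ₁θ₂}⋯Q_{θ_{κ-1}θ_κ} · Σ_{η∈ℕ₀^κ, Ση = n+1-κ} ρ_{θ₁}^{η₁}⋯ρ_{θ_κ}^{η_κ}. -/

import Mathlib

/-!
Expand `(Qⁿ⁺¹)ᵢⱼ = ∑ₗ Qᵢₗ (Qⁿ)ₗⱼ`; lower triangularity restricts `l` to `j ≤ l ≤ i`. The inner sum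
of the weight of a path is a complete homogeneous polynomial `h_{n+1-κ}` of its diagonal entries,
and `h_{d+1}(ρ₁,…,ρ_κ) = ρ₁ h_d(ρ₁,…,ρ_κ) + h_{d+1}(ρ₂,…,ρ_κ)` makes the weights of a path
`i = θ₁ > θ₂ > ⋯` satisfy `w_{n+1}(θ) = Qᵢᵢ w_n(θ) + Q_{iθ₂} w_n(θ₂, …)`. Removing the top vertex
is a bijection from paths `i → j` onto pairs `(l, path l → j)` with `j ≤ l < i`, so induction on
`n` gives the formula. Admissibility costs nothing: a path that is not admissible contains a zero
factor `Q_{θ_u θ_{u+1}}`, so one may sum over all decreasing paths instead.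
-/

def descList {k : ℕ} (S : Finset (Fin k)) : List (Fin k) :=
  (S.sort (· ≤ ·)).reverse

open Finset

theorem Finset.Nat.sum_antidiagonalTuple_succ {M : Type*} [AddCommMonoid M] (m N : ℕ)
    (f : (Fin (m + 1) → ℕ) → M) :
    ∑ η ∈ Nat.antidiagonalTuple (m + 1) N, f η =
      ∑ p ∈ antidiagonal N, ∑ t ∈ Nat.antidiagonalTuple m p.2, f (Fin.cons p.1 t) := by
  rw [sum_sigma']
  refine sum_nbij' (fun η => ⟨(η 0, ∑ u, Fin.tail η u), Fin.tail η⟩)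
    (fun q => Fin.cons q.1.1 q.2) ?_ ?_ (fun η _ => Fin.cons_self_tail η) ?_ (fun η _ => by simp)
  · intro η hη
    simp_all [Nat.mem_antidiagonalTuple, Fin.sum_univ_succ, Fin.tail]
  · rintro ⟨⟨a, b⟩, t⟩ h
    simp_all [Nat.mem_antidiagonalTuple, Fin.sum_univ_succ]
  · rintro ⟨⟨a, b⟩, t⟩ h
    simp_all [Nat.mem_antidiagonalTuple]

section CompleteHomogeneous

variable {R : Type*} [CommSemiring R] {m : ℕ}

def completeHomogeneous (ρ : Fin m → R) (d : ℕ) : R :=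
  ∑ η ∈ Nat.antidiagonalTuple m d, ∏ u, ρ u ^ η u

theorem completeHomogeneous_zero (ρ : Fin m → R) : completeHomogeneous ρ 0 = 1 := by
  simp [completeHomogeneous, Nat.antidiagonalTuple_zero_right]

theorem completeHomogeneous_fin_one (ρ : Fin 1 → R) (d : ℕ) :
    completeHomogeneous ρ d = ρ 0 ^ d := by
  simp [completeHomogeneous, Nat.antidiagonalTuple_one]

theorem completeHomogeneous_eq_sum_antidiagonal (ρ : Fin (m + 1) → R) (d : ℕ) :
    completeHomogeneous ρ d =
      ∑ p ∈ antidiagonal d, ρ 0 ^ p.1 * completeHomogeneous (Fin.tail ρ) p.2 := by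
  simp only [completeHomogeneous, Nat.sum_antidiagonalTuple_succ, Fin.prod_univ_succ,
    Fin.cons_zero, Fin.cons_succ, mul_sum]
  rfl

theorem completeHomogeneous_succ (ρ : Fin (m + 1) → R) (d : ℕ) :
    completeHomogeneous ρ (d + 1) =
      ρ 0 * completeHomogeneous ρ d + completeHomogeneous (Fin.tail ρ) (d + 1) := by
  simp only [completeHomogeneous_eq_sum_antidiagonal ρ, Nat.sum_antidiagonal_succ, mul_sum,
    pow_succ', pow_zero, one_mul, mul_assoc]
  rw [add_comm]

def completeHomogeneousShift (ρ : Fin m → R) (N : ℕ) : R :=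
  if N < m then 0 else completeHomogeneous ρ (N - m)

theorem completeHomogeneousShift_succ (ρ : Fin (m + 1) → R) (N : ℕ) :
    completeHomogeneousShift ρ (N + 1) =
      ρ 0 * completeHomogeneousShift ρ N + completeHomogeneousShift (Fin.tail ρ) N := by
  unfold completeHomogeneousShift
  rcases lt_trichotomy N m with h | rfl | h
  · simp [h, Nat.lt_succ_of_lt h]
  · simp [completeHomogeneous_zero]
  · obtain ⟨d, rfl⟩ := Nat.exists_eq_add_of_lt h
    rw [if_neg (by omega), if_neg (by omega), if_neg (by omega),
      show m + d + 1 + 1 - (m + 1) = d + 1 by omega, show m + d + 1 - (m + 1) = d by omega,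
      show m + d + 1 - m = d + 1 by omega, completeHomogeneous_succ]

end CompleteHomogeneous

section PathWeight

variable {ι R : Type*} [CommSemiring R] (Q : Matrix ι ι R)

def pathWeight (L : List ι) (n : ℕ) : R :=
  ((L.zip L.tail).map fun p => Q p.1 p.2).prod *
    completeHomogeneousShift (fun u : Fin L.length => Q (L.get u) (L.get u)) (n + 1)

theorem pathWeight_singleton (a : ι) (n : ℕ) : pathWeight Q [a] n = Q a a ^ n := by
  simp [pathWeight, completeHomogeneousShift, completeHomogeneous_fin_one]

theorem pathWeight_eq_zero_of_lt_length {L : List ι} {n : ℕ} (h : n + 1 < L.length) :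
    pathWeight Q L n = 0 := by
  simp [pathWeight, completeHomogeneousShift, h]

theorem pathWeight_cons_cons_succ (a b : ι) (L : List ι) (n : ℕ) :
    pathWeight Q (a :: b :: L) (n + 1) =
      Q a a * pathWeight Q (a :: b :: L) n + Q a b * pathWeight Q (b :: L) n := by
  simp only [pathWeight, List.tail_cons, List.zip_cons_cons, List.map_cons, List.prod_cons]
  rw [completeHomogeneousShift_succ]
  -- `Fin.tail` of the diagonal entries along `a :: b :: L` is, definitionally, those along `b :: L`.
  change _ * (Q a a * _ + completeHomogeneousShift
    (fun u : Fin (b :: L).length => Q ((b :: L).get u) ((b :: L).get u)) (n + 1)) = _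
  ring

theorem prod_zip_tail_eq_zero_of_not_isChain {L : List ι} (h : ¬ L.IsChain fun a b => Q a b ≠ 0) :
    ((L.zip L.tail).map fun p => Q p.1 p.2).prod = 0 := by
  induction L with
  | nil => simp at h
  | cons a L ih =>
    cases L with
    | nil => simp at h
    | cons b L =>
      simp only [List.isChain_cons_cons, not_and_or, not_not] at h
      simp only [List.tail_cons, List.zip_cons_cons, List.map_cons, List.prod_cons] at ih ⊢
      rcases h with h | h
      · rw [h, zero_mul]
      · rw [ih h, mul_zero]

theorem isChain_of_pathWeight_ne_zero {L : List ι} {n : ℕ} (h : pathWeight Q L n ≠ 0) :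
    L.IsChain fun a b => Q a b ≠ 0 := by
  by_contra hL
  exact h (by rw [pathWeight, prod_zip_tail_eq_zero_of_not_isChain Q hL, zero_mul])

end PathWeight

section DescPaths

variable {k : ℕ}

theorem descList_singleton (a : Fin k) : descList {a} = [a] := by
  simp [descList]

theorem length_descList (S : Finset (Fin k)) : (descList S).length = #S := by
  simp [descList]

theorem descList_eq_sort_ge (S : Finset (Fin k)) : descList S = S.sort (· ≥ ·) :=
  (List.SortedGT.eq_reverse_of_mem_iff_of_sortedLT (by simp) (sortedGT_sort S)
    (sortedLT_sort S)).symm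

theorem descList_insert {a : Fin k} {S : Finset (Fin k)} (h : ∀ b ∈ S, b < a) :
    descList (insert a S) = a :: descList S := by
  rw [descList_eq_sort_ge, descList_eq_sort_ge,
    sort_insert _ (fun b hb => (h b hb).le) fun ha => (h a ha).false]

theorem descList_eq_cons_erase {a : Fin k} {S : Finset (Fin k)} (ha : a ∈ S)
    (h : ∀ b ∈ S, b ≤ a) : descList S = a :: descList (S.erase a) := by
  conv_lhs => rw [← insert_erase ha]
  exact descList_insert fun b hb => (h b (mem_of_mem_erase hb)).lt_of_ne (ne_of_mem_erase hb)

def descPaths (i j : Fin k) : Finset (Finset (Fin k)) :=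
  {S | i ∈ S ∧ j ∈ S ∧ ∀ x ∈ S, j ≤ x ∧ x ≤ i}

variable {i j l : Fin k} {S T : Finset (Fin k)}

theorem mem_descPaths : S ∈ descPaths i j ↔ i ∈ S ∧ j ∈ S ∧ ∀ x ∈ S, j ≤ x ∧ x ≤ i := by
  simp [descPaths]

theorem descPaths_self (i : Fin k) : descPaths i i = {{i}} := by
  ext S
  simp only [mem_descPaths, mem_singleton, eq_singleton_iff_unique_mem]
  grind

theorem descPaths_eq_empty_of_lt (h : i < j) : descPaths i j = ∅ := by
  ext S
  simp only [mem_descPaths, notMem_empty, iff_false]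
  grind

theorem descList_eq_cons_of_mem_descPaths (hS : S ∈ descPaths i j) :
    descList S = i :: descList (S.erase i) := by
  rw [mem_descPaths] at hS
  exact descList_eq_cons_erase hS.1 fun x hx => (hS.2.2 x hx).2

theorem one_lt_card_of_mem_descPaths (hS : S ∈ descPaths i j) (h : j < i) : 1 < #S := by
  rw [mem_descPaths] at hS
  exact one_lt_card.2 ⟨i, hS.1, j, hS.2.1, h.ne'⟩

theorem insert_mem_descPaths (hS : S ∈ descPaths l j) (hl : l < i) :
    insert i S ∈ descPaths i j := by
  rw [mem_descPaths] at hS ⊢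
  grind

theorem notMem_of_mem_descPaths (hS : S ∈ descPaths l j) (hl : l < i) : i ∉ S :=
  fun hi => ((mem_descPaths.1 hS).2.2 i hi).2.not_gt hl

theorem eq_of_mem_descPaths (hS : S ∈ descPaths i j) (hS' : S ∈ descPaths l j) : i = l := by
  rw [mem_descPaths] at hS hS'
  exact le_antisymm (hS'.2.2 i hS.1).2 (hS.2.2 l hS'.1).2

theorem exists_erase_mem_descPaths (hT : T ∈ descPaths i j) (h : j < i) :
    ∃ l ∈ Ico j i, T.erase i ∈ descPaths l j := by
  rw [mem_descPaths] at hT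
  have hne : (T.erase i).Nonempty := ⟨j, mem_erase.2 ⟨h.ne, hT.2.1⟩⟩
  have hmax := (T.erase i).max'_mem hne
  refine ⟨(T.erase i).max' hne, ?_, ?_⟩
  · obtain ⟨hne, hmem⟩ := mem_erase.1 hmax
    exact mem_Ico.2 ⟨(hT.2.2 _ hmem).1, (hT.2.2 _ hmem).2.lt_of_ne hne⟩
  · rw [mem_descPaths]
    exact ⟨hmax, mem_erase.2 ⟨h.ne, hT.2.1⟩, fun x hx =>
      ⟨(hT.2.2 x (mem_of_mem_erase hx)).1, le_max' _ x hx⟩⟩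

theorem sum_descPaths_of_lt {M : Type*} [AddCommMonoid M] (h : j < i)
    (f : Finset (Fin k) → M) :
    ∑ T ∈ descPaths i j, f T = ∑ l ∈ Ico j i, ∑ S ∈ descPaths l j, f (insert i S) := by
  rw [sum_sigma']
  symm
  refine sum_bij (fun p _ => insert i p.2) (fun p hp => ?_) (fun p hp q hq hpq => ?_)
    (fun T hT => ?_) (fun _ _ => rfl)
  · rw [mem_sigma, mem_Ico] at hp
    exact insert_mem_descPaths hp.2 hp.1.2
  · rw [mem_sigma, mem_Ico] at hp hq
    have hS : p.2 = q.2 := by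
      rw [← erase_insert (notMem_of_mem_descPaths hp.2 hp.1.2),
        ← erase_insert (notMem_of_mem_descPaths hq.2 hq.1.2), hpq]
    exact Sigma.ext (eq_of_mem_descPaths hp.2 (hS ▸ hq.2)) (heq_of_eq hS)
  · obtain ⟨l, hl, hT'⟩ := exists_erase_mem_descPaths hT h
    exact ⟨⟨l, T.erase i⟩, mem_sigma.2 ⟨hl, hT'⟩, insert_erase (mem_descPaths.1 hT).1⟩

end DescPaths

section LowerTriangular

variable {ι R : Type*} [Fintype ι] [LinearOrder ι] [Semiring R]
  {Q : Matrix ι ι R}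

theorem pow_apply_eq_zero_of_lt (htri : ∀ i j, i < j → Q i j = 0) (n : ℕ) {i j : ι}
    (h : i < j) : (Q ^ n) i j = 0 := by
  have hQ : Q.BlockTriangular (OrderDual.toDual : ι → ιᵒᵈ) := fun _ _ h => htri _ _ h
  exact hQ.pow n h

theorem pow_succ_apply_of_le [LocallyFiniteOrder ι] (htri : ∀ i j, i < j → Q i j = 0)
    (n : ℕ) {i j : ι} (h : j ≤ i) :
    (Q ^ (n + 1)) i j = Q i i * (Q ^ n) i j + ∑ l ∈ Ico j i, Q i l * (Q ^ n) l j := by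
  rw [pow_succ', Matrix.mul_apply, ← sum_subset (subset_univ (Icc j i)), ← Ico_insert_right h,
    sum_insert right_notMem_Ico]
  intro l _ hl
  rw [mem_Icc, not_and_or, not_le, not_le] at hl
  rcases hl with hl | hl
  · rw [pow_apply_eq_zero_of_lt htri n hl, mul_zero]
  · rw [htri i l hl, zero_mul]

end LowerTriangular

section PathExpansion

variable {R : Type*} [CommSemiring R] {k : ℕ} (Q : Matrix (Fin k) (Fin k) R) {i j : Fin k}

theorem sum_descPaths_pathWeight_zero :
    ∑ T ∈ descPaths i j, pathWeight Q (descList T) 0 = (1 : Matrix (Fin k) (Fin k) R) i j := by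
  rcases lt_trichotomy i j with h | rfl | h
  · simp [descPaths_eq_empty_of_lt h, Matrix.one_apply_ne h.ne]
  · simp [descPaths_self, descList_singleton, pathWeight_singleton]
  · rw [Matrix.one_apply_ne h.ne']
    refine sum_eq_zero fun T hT => pathWeight_eq_zero_of_lt_length Q ?_
    rw [length_descList]
    exact one_lt_card_of_mem_descPaths hT h

theorem sum_descPaths_pathWeight_succ (h : j ≤ i) (n : ℕ) :
    ∑ T ∈ descPaths i j, pathWeight Q (descList T) (n + 1) =
      Q i i * ∑ T ∈ descPaths i j, pathWeight Q (descList T) n +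
        ∑ l ∈ Ico j i, Q i l * ∑ S ∈ descPaths l j, pathWeight Q (descList S) n := by
  rcases h.eq_or_lt with rfl | h
  · simp [descPaths_self, descList_singleton, pathWeight_singleton, pow_succ']
  · simp only [sum_descPaths_of_lt h, mul_sum, ← sum_add_distrib]
    refine sum_congr rfl fun l hl => sum_congr rfl fun S hS => ?_
    rw [descList_insert fun b hb => ((mem_descPaths.1 hS).2.2 b hb).2.trans_lt (mem_Ico.1 hl).2,
      descList_eq_cons_of_mem_descPaths hS, pathWeight_cons_cons_succ]

theorem pow_apply_eq_sum_descPaths (htri : ∀ i j : Fin k, i < j → Q i j = 0) (n : ℕ)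
    (i j : Fin k) : (Q ^ n) i j = ∑ T ∈ descPaths i j, pathWeight Q (descList T) n := by
  rcases lt_or_ge i j with h | h
  · rw [pow_apply_eq_zero_of_lt htri n h, descPaths_eq_empty_of_lt h, sum_empty]
  induction n generalizing i with
  | zero => rw [pow_zero, sum_descPaths_pathWeight_zero]
  | succ n ih =>
    rw [pow_succ_apply_of_le htri n h, sum_descPaths_pathWeight_succ Q h, ih i h]
    congr 1
    exact sum_congr rfl fun l hl => by rw [ih l (mem_Ico.1 hl).1]

end PathExpansion

open Classical in
theorem pow_entry_eq_admissible_path_sum_general (k : ℕ) (Q : Matrix (Fin k) (Fin k) ℝ)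
    (htri : ∀ i j : Fin k, i < j → Q i j = 0)
    (i j : Fin k)
    (n : ℕ) :
    (Q ^ n) i j =
      ∑ S ∈ Finset.univ.filter (fun S : Finset (Fin k) =>
          i ∈ S ∧ j ∈ S ∧ (∀ x ∈ S, j ≤ x ∧ x ≤ i) ∧
          List.Chain' (fun a b => Q a b ≠ 0) (descList S)),
        (((descList S).zip (descList S).tail).map (fun p => Q p.1 p.2)).prod *
          (if n + 1 < (descList S).length then 0
           else ∑ η ∈ Finset.Nat.antidiagonalTuple (descList S).length
                  (n + 1 - (descList S).length),
                ∏ u : Fin (descList S).length,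
                  Q ((descList S).get u) ((descList S).get u) ^ η u) := by
  rw [pow_apply_eq_sum_descPaths Q htri n i j,
    ← sum_filter_of_ne fun T _ => isChain_of_pathWeight_ne_zero Q]
  refine sum_congr ?_ fun _ _ => rfl
  ext S
  simp only [mem_filter, mem_descPaths, mem_univ, true_and, and_assoc]
  rfl

open Classical in
/-- Let `Q` be a lower triangular matrix with diagonal entries `ρ₁,…,ρ_k ∈ (0,1)`.
For indices `i > j` such that there is an admissible path from `i` to `j` (a
strictly decreasing sequence `i = θ₁ > θ₂ > ⋯ > θ_κ = j` with `Q_{θ_u θ_{u+1}} ≠ 0`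
for all `u`), the entry `(Qⁿ)_{ij}` is the sum over all such admissible paths `θ`
(identified with the finsets `S` of their elements, listed decreasingly) of
`Q_{θ₁θ₂}⋯Q_{θ_{κ-1}θ_κ} · Σ_{η∈ℕ₀^κ, Ση = n+1-κ} ρ_{θ₁}^{η₁}⋯ρ_{θ_κ}^{η_κ}`,
the inner sum being `0` when `n + 1 - κ < 0`. -/
theorem pow_entry_eq_admissible_path_sum (k : ℕ) (Q : Matrix (Fin k) (Fin k) ℝ)
    (htri : ∀ i j : Fin k, i < j → Q i j = 0)
    (hdiag : ∀ i, Q i i ∈ Set.Ioo (0 : ℝ) 1)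
    (i j : Fin k) (hij : j < i)
    (hex : ∃ S : Finset (Fin k), i ∈ S ∧ j ∈ S ∧ (∀ x ∈ S, j ≤ x ∧ x ≤ i) ∧
      List.Chain' (fun a b => Q a b ≠ 0) (descList S))
    (n : ℕ) :
    (Q ^ n) i j =
      ∑ S ∈ Finset.univ.filter (fun S : Finset (Fin k) =>
          i ∈ S ∧ j ∈ S ∧ (∀ x ∈ S, j ≤ x ∧ x ≤ i) ∧
          List.Chain' (fun a b => Q a b ≠ 0) (descList S)),
        (((descList S).zip (descList S).tail).map (fun p => Q p.1 p.2)).prod *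
          (if n + 1 < (descList S).length then 0
           else ∑ η ∈ Finset.Nat.antidiagonalTuple (descList S).length
                  (n + 1 - (descList S).length),
                ∏ u : Fin (descList S).length,
                  Q ((descList S).get u) ((descList S).get u) ^ η u) :=
  pow_entry_eq_admissible_path_sum_general k Q htri i j n
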